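/- (Superasymptotic bound.) Suppose ω, γ satisfy the hypotheses of the main residual-decay theorem about a point t, and set α := (1 + η̃₂/η̃₁)/(2η̃₁ρ). If 1/(5α) ≥ 1, then there exists a nonnegative integer k with 1/(5α) - 1 ≤ k < 1/(5α) such that |R[x_k](t)| ≤ e · η̃₃ · e^{-1/(5α)}. -/

import Mathlib

set_option maxHeartbeats 1000000

/-- Riccati residual for complex-analytic functions:
`R[x] = x' + x² + 2γx + ω²`. -/
noncomputable def riccatiResC (ω γ x : ℂ → ℂ) : ℂ → ℂ :=
  fun z => deriv x z + x z ^ 2 + 2 * γ z * x z + ω z ^ 2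

/-- The defect-correction iteration: `x₀ = iω`,
`x_{m+1} = x_m - R[x_m]/(2(x_m + γ))`. -/
noncomputable def riccatiIter (ω γ : ℂ → ℂ) : ℕ → (ℂ → ℂ)
  | 0 => fun z => Complex.I * ω z
  | m + 1 => fun z =>
      riccatiIter ω γ m z
        - riccatiResC ω γ (riccatiIter ω γ m) z
            / (2 * (riccatiIter ω γ m z + γ z))

/-- superasymptotic bound: under the hypotheses of the main
residual-decay theorem, with `α := (1 + η̃₂/η̃₁)/(2η̃₁ρ)`, if `1/(5α) ≥ 1` then
there is a nonnegative integer `k` with `1/(5α) - 1 ≤ k < 1/(5α)` such that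
`|R[x_k](t)| ≤ e·η̃₃·e^{-1/(5α)}`. -/
theorem stmt13 (t ρ : ℝ) (hρ : 0 < ρ) (ω γ : ℂ → ℂ)
    (hωa : AnalyticOnNhd ℂ ω (Metric.closedBall (t : ℂ) ρ))
    (hγa : AnalyticOnNhd ℂ γ (Metric.closedBall (t : ℂ) ρ))
    (η₁ η₂ η₃ η₄ : ℝ) (hη₁ : 0 < η₁)
    (hωlo : ∀ z ∈ Metric.closedBall (t : ℂ) ρ, η₁ ≤ ‖ω z‖)
    (hωhi : ∀ z ∈ Metric.closedBall (t : ℂ) ρ, ‖ω z‖ ≤ η₂)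
    (hω' : ∀ z ∈ Metric.closedBall (t : ℂ) ρ, ‖deriv ω z‖ ≤ η₃)
    (hγb : ∀ z ∈ Metric.closedBall (t : ℂ) ρ, ‖γ z‖ ≤ η₄)
    (hη₃ : η₃ ≤ η₁ ^ 2 / 17) (hη₄ : η₄ ≤ η₁ ^ 2 / (34 * η₂))
    (η₁' η₂' η₃' α : ℝ)
    (hη₃' : η₃' = η₃ + 2 * η₂ * η₄)
    (hη₁' : η₁' = η₁ - η₄ - 17 * η₃' / (4 * η₁))
    (hη₂' : η₂' = η₂ + η₄ + 17 * η₃' / (4 * η₁))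
    (hα : α = (1 + η₂' / η₁') / (2 * η₁' * ρ))
    (hbig : 1 ≤ 1 / (5 * α)) :
    ∃ k : ℕ, 1 / (5 * α) - 1 ≤ (k : ℝ) ∧ (k : ℝ) < 1 / (5 * α) ∧
      ‖riccatiResC ω γ (riccatiIter ω γ k) (t : ℂ)‖
        ≤ Real.exp 1 * η₃' * Real.exp (-(1 / (5 * α))) := by
  have hT : (t : ℂ) ∈ Metric.closedBall (t : ℂ) ρ := by
    simp [Metric.mem_closedBall, hρ.le]
  have hη₁₂ : η₁ ≤ η₂ := (hωlo _ hT).trans (hωhi _ hT)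
  have hη₂pos : 0 < η₂ := lt_of_lt_of_le hη₁ hη₁₂
  have hη₃0 : 0 ≤ η₃ := le_trans (norm_nonneg _) (hω' _ hT)
  have hη₄0 : 0 ≤ η₄ := le_trans (norm_nonneg _) (hγb _ hT)
  have h3'0 : 0 ≤ η₃' := by rw [hη₃']; positivity
  have h3'le : η₃' ≤ 2 * η₁ ^ 2 / 17 := by
    have h2 : 2 * η₂ * η₄ ≤ 2 * η₂ * (η₁ ^ 2 / (34 * η₂)) := by
      apply mul_le_mul_of_nonneg_left hη₄ (by positivity)
    have h3 : 2 * η₂ * (η₁ ^ 2 / (34 * η₂)) = η₁ ^ 2 / 17 := by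
      field_simp; ring
    rw [hη₃']; linarith
  have h4le : η₄ ≤ η₁ / 34 := by
    refine hη₄.trans ?_
    rw [div_le_div_iff₀ (by positivity) (by norm_num)]
    nlinarith
  have hDle : 17 * η₃' / (4 * η₁) ≤ η₁ / 2 := by
    rw [div_le_div_iff₀ (by positivity) (by norm_num)]
    nlinarith
  have h1'lb : 8 * η₁ / 17 ≤ η₁' := by rw [hη₁']; linarith
  have h1'pos : 0 < η₁' := lt_of_lt_of_le (by positivity) h1'lb
  have h2'pos : 0 < η₂' := by
    rw [hη₂']; positivity
  set r : ℝ := 213 / 640 with hr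
  set δ : ℝ := 5 / (2 * η₁') with hδ
  have hδpos : 0 < δ := by positivity
  -- quadratic coefficient bound
  have hq : η₃' / (4 * η₁' ^ 2) ≤ 17 / 128 := by
    rw [div_le_div_iff₀ (by positivity) (by norm_num)]
    nlinarith [sq_nonneg (η₁' - 8 * η₁ / 17), h1'lb, hη₁.le, h3'le]
  -- drift coefficient bound
  have hdrift : η₃' / (2 * η₁') * (3 / 2) ≤ 17 * η₃' / (4 * η₁) := by
    rw [div_mul_eq_mul_div, div_le_div_iff₀ (by positivity) (by positivity)]
    nlinarith [mul_le_mul_of_nonneg_left h1'lb h3'0, mul_nonneg h3'0 hη₁.le]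
  -- main induction
  have key : ∀ m : ℕ, (m : ℝ) * δ ≤ ρ →
      AnalyticOnNhd ℂ (riccatiIter ω γ m) (Metric.closedBall (t : ℂ) (ρ - m * δ)) ∧
      (∀ z ∈ Metric.closedBall (t : ℂ) (ρ - m * δ),
        ‖riccatiIter ω γ m z - Complex.I * ω z‖
          ≤ η₃' / (2 * η₁') * ∑ j ∈ Finset.range m, r ^ j) ∧
      (∀ z ∈ Metric.closedBall (t : ℂ) (ρ - m * δ),
        ‖riccatiResC ω γ (riccatiIter ω γ m) z‖ ≤ η₃' * r ^ m) := by
    intro m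
    induction m with
    | zero =>
      intro _
      simp only [Nat.cast_zero, zero_mul, sub_zero, Finset.range_zero,
        Finset.sum_empty, mul_zero, pow_zero, mul_one]
      refine ⟨analyticOnNhd_const.mul hωa, ?_, ?_⟩
      · intro z hz
        simp [riccatiIter]
      · intro z hz
        have hωd : DifferentiableAt ℂ ω z := (hωa z hz).differentiableAt
        have hder : deriv (fun w => Complex.I * ω w) z = Complex.I * deriv ω z :=
          deriv_const_mul _ hωd
        have hval : riccatiResC ω γ (riccatiIter ω γ 0) z
            = Complex.I * deriv ω z + 2 * γ z * (Complex.I * ω z) := by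
          show deriv (fun w => Complex.I * ω w) z + (Complex.I * ω z) ^ 2
              + 2 * γ z * (Complex.I * ω z) + ω z ^ 2
            = Complex.I * deriv ω z + 2 * γ z * (Complex.I * ω z)
          rw [hder]
          have : (Complex.I * ω z) ^ 2 = -ω z ^ 2 := by
            rw [mul_pow, Complex.I_sq]; ring
          rw [this]; ring
        rw [hval]
        calc ‖Complex.I * deriv ω z + 2 * γ z * (Complex.I * ω z)‖
            ≤ ‖Complex.I * deriv ω z‖ + ‖2 * γ z * (Complex.I * ω z)‖ := norm_add_le _ _
          _ ≤ η₃ + 2 * η₂ * η₄ := by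
              have h1 : ‖Complex.I * deriv ω z‖ = ‖deriv ω z‖ := by
                simp [norm_mul]
              have h2 : ‖2 * γ z * (Complex.I * ω z)‖ = 2 * ‖γ z‖ * ‖ω z‖ := by
                simp [norm_mul]
              rw [h1, h2]
              have := hω' z hz
              have := hγb z hz
              have := hωhi z hz
              have hg0 : (0:ℝ) ≤ ‖γ z‖ := norm_nonneg _
              nlinarith [norm_nonneg (ω z)]
          _ = η₃' := hη₃'.symm
    | succ m ih =>
      intro hm1
      have hmδ : (m : ℝ) * δ ≤ ρ := by
        push_cast at hm1 ⊢; nlinarith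
      obtain ⟨hA, hB, hC⟩ := ih hmδ
      set x := riccatiIter ω γ m with hxdef
      set Bm := Metric.closedBall (t : ℂ) (ρ - m * δ) with hBm
      set Bm1 := Metric.closedBall (t : ℂ) (ρ - (m + 1 : ℕ) * δ) with hBm1
      have hrad : ρ - ((m + 1 : ℕ) : ℝ) * δ ≤ ρ - (m : ℝ) * δ := by
        push_cast; nlinarith
      have hsub : Bm1 ⊆ Bm := Metric.closedBall_subset_closedBall hrad
      have hBmρ : Bm ⊆ Metric.closedBall (t : ℂ) ρ :=
        Metric.closedBall_subset_closedBall (by nlinarith [Nat.cast_nonneg (α := ℝ) m])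
      -- geometric sum bound
      have hrm0 : (0:ℝ) ≤ r ^ m := by positivity
      have hrm1 : r ^ m ≤ 1 := pow_le_one₀ (by norm_num) (by norm_num)
      have hsum : ∑ j ∈ Finset.range m, r ^ j ≤ 3 / 2 := by
        rw [geom_sum_eq (by norm_num : r ≠ 1)]
        rw [div_le_iff_of_neg (by norm_num : r - 1 < 0)]
        nlinarith
      have hsum0 : (0:ℝ) ≤ ∑ j ∈ Finset.range m, r ^ j :=
        Finset.sum_nonneg fun j _ => by positivity
      -- drift bound
      have dbound : ∀ z ∈ Bm, ‖x z - Complex.I * ω z‖ ≤ 17 * η₃' / (4 * η₁) := by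
        intro z hz
        refine (hB z hz).trans ?_
        refine le_trans ?_ hdrift
        exact mul_le_mul_of_nonneg_left hsum (by positivity)
      -- lower bound on |x + γ|
      have wlow : ∀ z ∈ Bm, η₁' ≤ ‖x z + γ z‖ := by
        intro z hz
        have htri : ‖Complex.I * ω z‖
            ≤ ‖x z + γ z‖ + ‖x z - Complex.I * ω z‖ + ‖γ z‖ := by
          have hrepr : Complex.I * ω z = (x z + γ z) - (x z - Complex.I * ω z) - γ z := by
            ring
          calc ‖Complex.I * ω z‖
              = ‖(x z + γ z) - (x z - Complex.I * ω z) - γ z‖ := by rw [← hrepr]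
            _ ≤ ‖(x z + γ z) - (x z - Complex.I * ω z)‖ + ‖γ z‖ := norm_sub_le _ _
            _ ≤ ‖x z + γ z‖ + ‖x z - Complex.I * ω z‖ + ‖γ z‖ := by
                have := norm_sub_le (x z + γ z) (x z - Complex.I * ω z)
                linarith
        have hIω : ‖Complex.I * ω z‖ = ‖ω z‖ := by simp [norm_mul]
        have h1 := hωlo z (hBmρ hz)
        have h2 := hγb z (hBmρ hz)
        have h3 := dbound z hz
        rw [hIω] at htri
        rw [hη₁']
        linarith
      have hwne : ∀ z ∈ Bm, x z + γ z ≠ 0 := by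
        intro z hz h0
        have := wlow z hz
        rw [h0, norm_zero] at this
        linarith
      -- analyticity
      have hγm : AnalyticOnNhd ℂ γ Bm := hγa.mono hBmρ
      have hωm : AnalyticOnNhd ℂ ω Bm := hωa.mono hBmρ
      have hRA : AnalyticOnNhd ℂ (riccatiResC ω γ x) Bm := by
        show AnalyticOnNhd ℂ
          (fun z => deriv x z + x z ^ 2 + 2 * γ z * x z + ω z ^ 2) Bm
        exact ((hA.deriv.add (hA.pow 2)).add
          ((analyticOnNhd_const.mul hγm).mul hA)).add (hωm.pow 2)
      have hwA : AnalyticOnNhd ℂ (fun z => 2 * (x z + γ z)) Bm :=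
        analyticOnNhd_const.mul (hA.add hγm)
      set u : ℂ → ℂ := fun z => riccatiResC ω γ x z / (2 * (x z + γ z)) with hu
      have huA : AnalyticOnNhd ℂ u Bm := by
        refine hRA.div hwA ?_
        intro z hz
        exact mul_ne_zero two_ne_zero (hwne z hz)
      have hx1 : riccatiIter ω γ (m + 1) = fun z => x z - u z := rfl
      have hA1 : AnalyticOnNhd ℂ (riccatiIter ω γ (m + 1)) Bm := by
        rw [hx1]; exact hA.sub huA
      -- bound on u
      have uM : ∀ z ∈ Bm, ‖u z‖ ≤ η₃' * r ^ m / (2 * η₁') := by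
        intro z hz
        have hden : 2 * η₁' ≤ ‖2 * (x z + γ z)‖ := by
          rw [norm_mul]
          have : ‖(2:ℂ)‖ = 2 := by norm_num
          rw [this]
          nlinarith [wlow z hz]
        rw [hu]
        simp only [norm_div]
        apply div_le_div₀ (by positivity) (hC z hz) (by positivity) hden
      refine ⟨hA1.mono hsub, ?_, ?_⟩
      · -- drift at step m+1
        intro z hz
        rw [hx1]
        have : x z - u z - Complex.I * ω z = (x z - Complex.I * ω z) - u z := by ring
        rw [this]
        calc ‖(x z - Complex.I * ω z) - u z‖
            ≤ ‖x z - Complex.I * ω z‖ + ‖u z‖ := norm_sub_le _ _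
          _ ≤ η₃' / (2 * η₁') * ∑ j ∈ Finset.range m, r ^ j
              + η₃' * r ^ m / (2 * η₁') := add_le_add (hB z (hsub hz)) (uM z (hsub hz))
          _ = η₃' / (2 * η₁') * ∑ j ∈ Finset.range (m + 1), r ^ j := by
              rw [Finset.sum_range_succ]; field_simp
      · -- residual at step m+1
        intro z hz
        have hzm : z ∈ Bm := hsub hz
        have hxd : DifferentiableAt ℂ x z := (hA z hzm).differentiableAt
        have hud : DifferentiableAt ℂ u z := (huA z hzm).differentiableAt
        have hderiv : deriv (riccatiIter ω γ (m + 1)) z = deriv x z - deriv u z := by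
          rw [hx1]; exact deriv_sub hxd hud
        have hid : riccatiResC ω γ (riccatiIter ω γ (m + 1)) z = u z ^ 2 - deriv u z := by
          show deriv (riccatiIter ω γ (m + 1)) z + (riccatiIter ω γ (m + 1) z) ^ 2
              + 2 * γ z * riccatiIter ω γ (m + 1) z + ω z ^ 2 = u z ^ 2 - deriv u z
          rw [hderiv, hx1]
          simp only []
          have huz : u z = riccatiResC ω γ x z / (2 * (x z + γ z)) := rfl
          have hRz : riccatiResC ω γ x z
              = deriv x z + x z ^ 2 + 2 * γ z * x z + ω z ^ 2 := rfl
          have hne : (2 : ℂ) * (x z + γ z) ≠ 0 :=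
            mul_ne_zero two_ne_zero (hwne z hzm)
          have key : u z * (2 * (x z + γ z))
              = deriv x z + x z ^ 2 + 2 * γ z * x z + ω z ^ 2 := by
            rw [huz, ← hRz]; exact div_mul_cancel₀ _ hne
          field_simp [huz, hRz]
          linear_combination -key
        rw [hid]
        -- Cauchy estimate for deriv u at z
        have hball : Metric.closedBall z δ ⊆ Bm := by
          rw [hBm]
          apply Metric.closedBall_subset_closedBall'
          have hzt : dist z (t : ℂ) ≤ ρ - ((m + 1 : ℕ) : ℝ) * δ := hz
          push_cast at hzt ⊢
          nlinarith
        have hderu : ‖deriv u z‖ ≤ η₃' * r ^ m / (2 * η₁') / δ := by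
          apply Complex.norm_deriv_le_of_forall_mem_sphere_norm_le hδpos
          · have hdiff : DifferentiableOn ℂ u (Metric.closedBall z δ) :=
              (huA.mono hball).differentiableOn
            exact DifferentiableOn.diffContOnCl (by rwa [closure_ball z hδpos.ne'])
          · intro w hw
            exact uM w (hball (Metric.sphere_subset_closedBall hw))
        have huz2 : ‖u z ^ 2‖ ≤ (η₃' * r ^ m / (2 * η₁')) ^ 2 := by
          rw [norm_pow]
          exact pow_le_pow_left₀ (norm_nonneg _) (uM z hzm) 2
        have hMδ : η₃' * r ^ m / (2 * η₁') / δ = η₃' * r ^ m / 5 := by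
          rw [hδ]; field_simp
        have hM2 : (η₃' * r ^ m / (2 * η₁')) ^ 2 ≤ η₃' * r ^ m * (17 / 128) := by
          have hexp : (η₃' * r ^ m / (2 * η₁')) ^ 2
              = (η₃' * r ^ m) * (η₃' / (4 * η₁' ^ 2)) * r ^ m := by
            field_simp; ring
          rw [hexp]
          have h1 : (η₃' * r ^ m) * (η₃' / (4 * η₁' ^ 2)) * r ^ m
              ≤ (η₃' * r ^ m) * (17 / 128) * 1 := by
            apply mul_le_mul (mul_le_mul_of_nonneg_left hq (by positivity))
              hrm1 hrm0 (by positivity)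
          linarith
        calc ‖u z ^ 2 - deriv u z‖ ≤ ‖u z ^ 2‖ + ‖deriv u z‖ := norm_sub_le _ _
          _ ≤ η₃' * r ^ m * (17 / 128) + η₃' * r ^ m / 5 := by
              rw [hMδ] at hderu; linarith
          _ = η₃' * r ^ (m + 1) := by rw [pow_succ, hr]; ring
  -- deduce α > 0
  have hα0 : 0 < α := by
    rw [hα]; positivity
  set c : ℝ := 1 / (5 * α) with hc
  have hc1 : 1 ≤ c := hbig
  have hc0 : 0 < c := lt_of_lt_of_le one_pos hc1
  set k : ℕ := ⌈c⌉₊ - 1 with hk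
  have hceil1 : 1 ≤ ⌈c⌉₊ := Nat.one_le_ceil_iff.2 hc0
  have hkcast : (k : ℝ) = (⌈c⌉₊ : ℝ) - 1 := by
    rw [hk]; push_cast [hceil1]; ring
  have hklt : (k : ℝ) < c := by
    rw [hkcast]
    have := Nat.ceil_lt_add_one hc0.le
    linarith
  have hkge : c - 1 ≤ (k : ℝ) := by
    rw [hkcast]
    have := Nat.le_ceil c
    linarith
  -- c * δ ≤ ρ
  have h1q : (0:ℝ) < 1 + η₂' / η₁' := by positivity
  have hcδ : c * δ ≤ ρ := by
    have hceq : c * δ = ρ / (1 + η₂' / η₁') := by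
      rw [hc, hδ, hα]
      field_simp
    rw [hceq]
    rw [div_le_iff₀ h1q]
    have hq0 : 0 ≤ η₂' / η₁' := div_nonneg h2'pos.le h1'pos.le
    nlinarith
  have hkδ : (k : ℝ) * δ ≤ ρ := by
    have : (k : ℝ) * δ ≤ c * δ := mul_le_mul_of_nonneg_right hklt.le hδpos.le
    linarith
  obtain ⟨_, _, hCk⟩ := key k hkδ
  have htk : (t : ℂ) ∈ Metric.closedBall (t : ℂ) (ρ - k * δ) := by
    simp only [Metric.mem_closedBall, dist_self]
    nlinarith [Nat.cast_nonneg (α := ℝ) k, hδpos]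
  have hmain := hCk _ htk
  refine ⟨k, hkge, hklt, ?_⟩
  -- r^k ≤ e * exp(-c)
  have hepos := Real.exp_pos 1
  have hrexp : r ≤ Real.exp (-1) := by
    rw [Real.exp_neg]
    have hd9 := Real.exp_one_lt_d9
    have hi : (Real.exp 1)⁻¹ * Real.exp 1 = 1 := inv_mul_cancel₀ hepos.ne'
    nlinarith [inv_pos.2 hepos]
  have hrk : r ^ k ≤ Real.exp (-(k : ℝ)) := by
    calc r ^ k ≤ Real.exp (-1) ^ k :=
          pow_le_pow_left₀ (by norm_num) hrexp k
      _ = Real.exp (-(k : ℝ)) := by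
          rw [← Real.exp_nat_mul]; ring_nf
  have hexpk : Real.exp (-(k : ℝ)) ≤ Real.exp 1 * Real.exp (-c) := by
    rw [← Real.exp_add]
    apply Real.exp_le_exp.2
    linarith
  refine hmain.trans ?_
  calc η₃' * r ^ k ≤ η₃' * (Real.exp 1 * Real.exp (-c)) :=
        mul_le_mul_of_nonneg_left (hrk.trans hexpk) h3'0
    _ = Real.exp 1 * η₃' * Real.exp (-c) := by ring
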